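/- (Output error evaluation, first corrected output.) In the goal-oriented setting with coercivity constants α_A ≥ α_{A,LB} > 0 and α_G ≥ α_{G,LB} > 0, define the corrected output error at final time by sᴺ − s^{N_s,N} := lᵀ eᴺ − Δt·∑_{n=0}^{N−1} (r^{n+1})ᵀ Ψ̃ⁿ. Then |sᴺ − s^{N_s,N}| ≤ Δt·( ∑_{n=1}^{N} ‖rⁿ‖₋₁² )^{1/2} · Δ_du^N, where Δ_du^N := ( ((T + Δt)/(α_{G,LB}·α_{A,LB}))·∑_{m=0}^{N−1} ‖ϱᵐ‖₋₁² )^{1/2} and T = N·Δt. -/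

import Mathlib

/-!
The primal and dual recursions are adjoint to each other, so `lᵀ eᴺ = Δt ∑ (rⁿ⁺¹)ᵀ Ψⁿ` exactly
and the corrected output error is `Δt ∑ (rⁿ⁺¹)ᵀ εⁿ`. Each term is at most `‖rⁿ⁺¹‖₋₁ ‖εⁿ‖_{G*}`,
so by Cauchy–Schwarz it remains to bound the dual error. Testing its backward recursion with `εⁿ`
and telescoping from `εᴺ = 0` gives `α_G α_A ‖εⁿ‖²_{G*} ≤ Δt ∑ₘ ‖ϱᵐ‖₋₁²` for every `n < N`.
-/

open Matrix BigOperators Finset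

/-- The energy norm `‖v‖_{G*} = √(vᵀ G* v)` induced by a matrix `G`. -/
noncomputable def normG {d : ℕ} (G : Matrix (Fin d) (Fin d) ℝ) (v : Fin d → ℝ) : ℝ :=
  Real.sqrt (v ⬝ᵥ G.mulVec v)

/-- The dual norm `‖r‖₋₁ = sup_{v ≠ 0} (rᵀ v)/‖v‖_{G*}`. -/
noncomputable def dualNorm {d : ℕ} (G : Matrix (Fin d) (Fin d) ℝ) (r : Fin d → ℝ) : ℝ :=
  ⨆ v : {v : Fin d → ℝ // v ≠ 0}, (r ⬝ᵥ (v : Fin d → ℝ)) / normG G (v : Fin d → ℝ)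

/-- The symmetric part `(A + Aᵀ)/2` of a matrix. -/
noncomputable def symPart {d : ℕ} (A : Matrix (Fin d) (Fin d) ℝ) : Matrix (Fin d) (Fin d) ℝ :=
  ((1 : ℝ)/2) • (A + Aᵀ)

namespace Matrix

variable {n : Type*}

theorem PosSemidef.isSymm {M : Matrix n n ℝ} (hM : M.PosSemidef) : M.IsSymm :=
  isHermitian_iff_isSymm.mp hM.isHermitian

variable [Fintype n]

theorem IsSymm.dotProduct_mulVec_comm {R : Type*} [CommSemiring R] {M : Matrix n n R}
    (hM : M.IsSymm) (x y : n → R) : x ⬝ᵥ M *ᵥ y = y ⬝ᵥ M *ᵥ x := by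
  rw [← dotProduct_transpose_mulVec, hM.eq]

variable {M : Matrix n n ℝ}

theorem PosSemidef.dotProduct_mulVec_le_sqrt_mul_sqrt (hM : M.PosSemidef) (x y : n → ℝ) :
    x ⬝ᵥ M *ᵥ y ≤ √(x ⬝ᵥ M *ᵥ x) * √(y ⬝ᵥ M *ᵥ y) := by
  let := M.toSeminormedAddCommGroup hM
  let := M.toInnerProductSpace hM
  have h := real_inner_le_norm x y
  simp only [norm_eq_sqrt_re_inner (𝕜 := ℝ)] at h
  change (M *ᵥ y) ⬝ᵥ x ≤ √((M *ᵥ x) ⬝ᵥ x) * √((M *ᵥ y) ⬝ᵥ y) at h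
  simpa only [dotProduct_comm _ x, dotProduct_comm _ y] using h

theorem PosSemidef.two_mul_dotProduct_mulVec_le (hM : M.PosSemidef) (x y : n → ℝ) :
    2 * (x ⬝ᵥ M *ᵥ y) ≤ x ⬝ᵥ M *ᵥ x + y ⬝ᵥ M *ᵥ y := by
  have h := hM.dotProduct_mulVec_nonneg (x - y)
  simp only [star_trivial, mulVec_sub, dotProduct_sub, sub_dotProduct,
    hM.isSymm.dotProduct_mulVec_comm y x] at h
  linarith

end Matrix

theorem dotProduct_mulVec_symPart {d : ℕ} (A : Matrix (Fin d) (Fin d) ℝ) (v : Fin d → ℝ) :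
    v ⬝ᵥ symPart A *ᵥ v = v ⬝ᵥ Aᵀ *ᵥ v := by
  rw [symPart, smul_mulVec, add_mulVec, dotProduct_smul, dotProduct_add,
    dotProduct_transpose_mulVec A v v, smul_eq_mul]
  ring

section DualNorm

variable {d : ℕ} {G : Matrix (Fin d) (Fin d) ℝ}

theorem normG_neg (v : Fin d → ℝ) : normG G (-v) = normG G v := by
  simp [normG, mulVec_neg]

-- The supremum is attained at `G⁻¹ r`, the Riesz representative of `r` in the `G`-inner product.
theorem dualNorm_bddAbove (hG : G.PosDef) (r : Fin d → ℝ) :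
    BddAbove (Set.range fun v : {v : Fin d → ℝ // v ≠ 0} =>
      (r ⬝ᵥ (v : Fin d → ℝ)) / normG G (v : Fin d → ℝ)) := by
  refine ⟨normG G (G⁻¹ *ᵥ r), ?_⟩
  rintro _ ⟨⟨v, hv⟩, rfl⟩
  have hpos : 0 < normG G v := Real.sqrt_pos.mpr (by simpa using hG.dotProduct_mulVec_pos hv)
  have hriesz : r ⬝ᵥ v = G⁻¹ *ᵥ r ⬝ᵥ G *ᵥ v := by
    rw [← hG.posSemidef.isSymm.dotProduct_mulVec_comm, mulVec_mulVec,
      mul_nonsing_inv _ (isUnit_iff_ne_zero.mpr hG.det_pos.ne'), one_mulVec, dotProduct_comm]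
  rw [div_le_iff₀ hpos, hriesz]
  exact hG.posSemidef.dotProduct_mulVec_le_sqrt_mul_sqrt _ _

theorem dotProduct_le_dualNorm_mul_normG (hG : G.PosDef) (r v : Fin d → ℝ) :
    r ⬝ᵥ v ≤ dualNorm G r * normG G v := by
  rcases eq_or_ne v 0 with rfl | hv
  · simp [normG]
  have hpos : 0 < normG G v := Real.sqrt_pos.mpr (by simpa using hG.dotProduct_mulVec_pos hv)
  rw [← div_le_iff₀ hpos]
  exact le_ciSup (dualNorm_bddAbove hG r) ⟨v, hv⟩

theorem abs_dotProduct_le_dualNorm_mul_normG (hG : G.PosDef) (r v : Fin d → ℝ) :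
    |r ⬝ᵥ v| ≤ dualNorm G r * normG G v := by
  refine abs_le.mpr ⟨?_, dotProduct_le_dualNorm_mul_normG hG r v⟩
  have h := dotProduct_le_dualNorm_mul_normG hG r (-v)
  rw [dotProduct_neg, normG_neg] at h
  linarith

theorem abs_sum_dotProduct_le_sqrt_mul_sqrt (hG : G.PosDef) (r ε : ℕ → Fin d → ℝ) (N : ℕ) :
    |∑ k ∈ range N, r (k + 1) ⬝ᵥ ε k| ≤
      √(∑ k ∈ Icc 1 N, dualNorm G (r k) ^ 2) * √(∑ k ∈ range N, normG G (ε k) ^ 2) := by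
  have hshift :
      ∑ k ∈ Icc 1 N, dualNorm G (r k) ^ 2 = ∑ k ∈ range N, dualNorm G (r (k + 1)) ^ 2 := by
    rw [range_eq_Ico, sum_Ico_add' (fun k => dualNorm G (r k) ^ 2), zero_add,
      Ico_add_one_right_eq_Icc]
  calc |∑ k ∈ range N, r (k + 1) ⬝ᵥ ε k|
      ≤ ∑ k ∈ range N, dualNorm G (r (k + 1)) * normG G (ε k) :=
        (abs_sum_le_sum_abs _ _).trans
          (sum_le_sum fun k _ => abs_dotProduct_le_dualNorm_mul_normG hG _ _)
    _ ≤ _ := hshift ▸ Real.sum_mul_le_sqrt_mul_sqrt _ _ _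

end DualNorm

section OutputIdentity

variable {R ι : Type*} [CommRing R] [Fintype ι] {M A : Matrix ι ι R} {τ : R}
  {e r Ψ : ℕ → ι → R}

-- Pair the primal step `k + 1` with `Ψ k` and the dual step `k` with `e (k + 1)`:
-- the `A`-terms cancel and the `M`-terms telescope.
theorem dual_dotProduct_mulVec_primal_eq (hM : M.IsSymm) (he0 : e 0 = 0) (N : ℕ)
    (hprimal : ∀ k < N, (M + τ • A) *ᵥ e (k + 1) = M *ᵥ e k - τ • r (k + 1))
    (hdual : ∀ k < N, (M + τ • Aᵀ) *ᵥ Ψ k = M *ᵥ Ψ (k + 1)) :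
    Ψ N ⬝ᵥ M *ᵥ e N = -(τ * ∑ k ∈ range N, r (k + 1) ⬝ᵥ Ψ k) := by
  induction N with
  | zero => simp [he0]
  | succ N ih =>
    have hadj : e (N + 1) ⬝ᵥ (M + τ • Aᵀ) *ᵥ Ψ N = Ψ N ⬝ᵥ (M + τ • A) *ᵥ e (N + 1) := by
      rw [← dotProduct_transpose_mulVec, transpose_add, transpose_smul, transpose_transpose, hM.eq]
    rw [← dotProduct_transpose_mulVec, hM.eq, ← hdual N N.lt_add_one, hadj,
      hprimal N N.lt_add_one, dotProduct_sub, dotProduct_smul, smul_eq_mul,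
      ih (fun k hk => hprimal k (hk.trans N.lt_add_one))
        (fun k hk => hdual k (hk.trans N.lt_add_one)),
      sum_range_succ, dotProduct_comm (Ψ N)]
    ring

theorem output_eq_sum_residual_dotProduct_dual (hM : M.IsSymm) (he0 : e 0 = 0) {N : ℕ}
    (hprimal : ∀ k < N, (M + τ • A) *ᵥ e (k + 1) = M *ᵥ e k - τ • r (k + 1))
    {l : ι → R} (hΨN : M *ᵥ Ψ N = -l)
    (hdual : ∀ k < N, (M + τ • Aᵀ) *ᵥ Ψ k = M *ᵥ Ψ (k + 1)) :
    l ⬝ᵥ e N = τ * ∑ k ∈ range N, r (k + 1) ⬝ᵥ Ψ k := by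
  rw [← neg_neg l, ← hΨN, neg_dotProduct, dotProduct_comm, ← dotProduct_transpose_mulVec, hM.eq,
    dual_dotProduct_mulVec_primal_eq hM he0 N hprimal hdual, neg_neg]

end OutputIdentity

theorem le_sum_Ico_of_le_add {a b c : ℕ → ℝ} {N : ℕ} (hba : ∀ n < N, b n ≤ a n)
    (hbN : b N ≤ 0) (hstep : ∀ n < N, a n ≤ b (n + 1) + c n) {n : ℕ} (hn : n < N) :
    a n ≤ ∑ m ∈ Ico n N, c m := by
  have hb : ∀ k ≤ N, b k ≤ ∑ m ∈ Ico k N, c m := by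
    intro k hk
    induction hk using Nat.decreasingInduction with
    | self => simpa using hbN
    | of_succ k hk ih =>
      rw [sum_eq_sum_Ico_succ_bot hk]
      linarith [hba k hk, hstep k hk]
  rw [sum_eq_sum_Ico_succ_bot hn]
  linarith [hstep n hn, hb (n + 1) hn]

section DualErrorStability

variable {d : ℕ} {M A G : Matrix (Fin d) (Fin d) ℝ} {τ αA : ℝ}

-- Test the step with `x`: the cross term `xᵀ M y` is split by the AM-GM inequality for `M`,
-- and `ϱᵀ x ≤ ‖ϱ‖₋₁ ‖x‖_G` is split by Young's inequality with weight `αA`.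
theorem mul_dotProduct_mulVec_le_of_step (hM : M.PosSemidef) (hG : G.PosDef) (hτ : 0 ≤ τ)
    (hαA : 0 ≤ αA) (hcoA : ∀ v, αA * normG G v ^ 2 ≤ v ⬝ᵥ symPart A *ᵥ v)
    {x y ϱ : Fin d → ℝ} (hstep : (M + τ • Aᵀ) *ᵥ x = M *ᵥ y - τ • ϱ) :
    αA * (x ⬝ᵥ (M + τ • symPart A) *ᵥ x) ≤ αA * (y ⬝ᵥ M *ᵥ y) + τ * dualNorm G ϱ ^ 2 := by
  have htest : x ⬝ᵥ M *ᵥ x + τ * (x ⬝ᵥ symPart A *ᵥ x) = x ⬝ᵥ M *ᵥ y - τ * (ϱ ⬝ᵥ x) := by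
    have h := congrArg (x ⬝ᵥ ·) hstep
    simp only [add_mulVec, smul_mulVec, dotProduct_add, dotProduct_sub, dotProduct_smul,
      smul_eq_mul] at h
    rw [dotProduct_mulVec_symPart, h, dotProduct_comm ϱ]
  have hcross := hM.two_mul_dotProduct_mulVec_le x y
  have hpair := (neg_le_abs _).trans (abs_dotProduct_le_dualNorm_mul_normG hG ϱ x)
  have hyoung : 2 * αA * (dualNorm G ϱ * normG G x) ≤
      dualNorm G ϱ ^ 2 + αA * (αA * normG G x ^ 2) := by
    nlinarith [sq_nonneg (dualNorm G ϱ - αA * normG G x)]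
  have hcoA' := mul_le_mul_of_nonneg_left (hcoA x) hαA
  simp only [add_mulVec, smul_mulVec, dotProduct_add, dotProduct_smul, smul_eq_mul]
  nlinarith [mul_le_mul_of_nonneg_left hcross hαA,
    mul_le_mul_of_nonneg_left hpair (mul_nonneg hτ hαA),
    mul_le_mul_of_nonneg_left hyoung hτ, mul_le_mul_of_nonneg_left hcoA' hτ]

variable {αG : ℝ} {ε ϱ : ℕ → Fin d → ℝ} {N : ℕ}

theorem mul_mul_normG_sq_le_of_steps (hM : M.PosSemidef) (hG : G.PosDef) (hτ : 0 ≤ τ)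
    (hαA : 0 ≤ αA) (hcoA : ∀ v, αA * normG G v ^ 2 ≤ v ⬝ᵥ symPart A *ᵥ v)
    (hcoG : ∀ v, αG * normG G v ^ 2 ≤ v ⬝ᵥ (M + τ • symPart A) *ᵥ v)
    (hεN : ε N = 0) (hsteps : ∀ k < N, (M + τ • Aᵀ) *ᵥ ε k = M *ᵥ ε (k + 1) - τ • ϱ k)
    {n : ℕ} (hn : n < N) :
    αG * αA * normG G (ε n) ^ 2 ≤ τ * ∑ m ∈ range N, dualNorm G (ϱ m) ^ 2 := by
  have henergy_le : ∀ k, αA * (ε k ⬝ᵥ M *ᵥ ε k) ≤ αA * (ε k ⬝ᵥ (M + τ • symPart A) *ᵥ ε k) := by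
    intro k
    have hQ := (mul_nonneg hαA (sq_nonneg _)).trans (hcoA (ε k))
    simp only [add_mulVec, smul_mulVec, dotProduct_add, dotProduct_smul, smul_eq_mul]
    nlinarith [mul_nonneg hαA (mul_nonneg hτ hQ)]
  have htel := le_sum_Ico_of_le_add (fun k _ => henergy_le k) (by simp [hεN])
    (fun k hk => mul_dotProduct_mulVec_le_of_step hM hG hτ hαA hcoA (hsteps k hk)) hn
  calc αG * αA * normG G (ε n) ^ 2 = αA * (αG * normG G (ε n) ^ 2) := by ring
    _ ≤ αA * (ε n ⬝ᵥ (M + τ • symPart A) *ᵥ ε n) := mul_le_mul_of_nonneg_left (hcoG _) hαA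
    _ ≤ ∑ m ∈ Ico n N, τ * dualNorm G (ϱ m) ^ 2 := htel
    _ ≤ ∑ m ∈ range N, τ * dualNorm G (ϱ m) ^ 2 :=
      sum_le_sum_of_subset_of_nonneg (range_eq_Ico N ▸ Ico_subset_Ico_left n.zero_le)
        fun m _ _ => mul_nonneg hτ (sq_nonneg _)
    _ = τ * ∑ m ∈ range N, dualNorm G (ϱ m) ^ 2 := (mul_sum _ _ _).symm

theorem sum_normG_sq_le_of_steps (hM : M.PosSemidef) (hG : G.PosDef) (hτ : 0 ≤ τ)
    (hαA : 0 < αA) (hαG : 0 < αG) (hcoA : ∀ v, αA * normG G v ^ 2 ≤ v ⬝ᵥ symPart A *ᵥ v)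
    (hcoG : ∀ v, αG * normG G v ^ 2 ≤ v ⬝ᵥ (M + τ • symPart A) *ᵥ v)
    (hεN : ε N = 0) (hsteps : ∀ k < N, (M + τ • Aᵀ) *ᵥ ε k = M *ᵥ ε (k + 1) - τ • ϱ k) :
    ∑ n ∈ range N, normG G (ε n) ^ 2 ≤
      N * τ / (αG * αA) * ∑ m ∈ range N, dualNorm G (ϱ m) ^ 2 := by
  calc ∑ n ∈ range N, normG G (ε n) ^ 2
      ≤ ∑ _n ∈ range N, (τ * ∑ m ∈ range N, dualNorm G (ϱ m) ^ 2) / (αG * αA) :=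
        sum_le_sum fun n hn => by
          rw [le_div_iff₀ (by positivity), mul_comm]
          exact mul_mul_normG_sq_le_of_steps hM hG hτ hαA.le hcoA hcoG hεN hsteps
            (mem_range.mp hn)
    _ = N * τ / (αG * αA) * ∑ m ∈ range N, dualNorm G (ϱ m) ^ 2 := by
      rw [sum_const, card_range, nsmul_eq_mul]
      ring

end DualErrorStability

theorem stmt15_general {d : ℕ}
    (M A G : Matrix (Fin d) (Fin d) ℝ) (hM : M.PosSemidef)
    (Δt : ℝ) (hΔt : 0 < Δt)
    (hG : G.PosDef)
    (N : ℕ)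
    (αA αALB : ℝ) (hαALB : 0 < αALB) (hαALBle : αALB ≤ αA)
    (hcoA : ∀ v : Fin d → ℝ, αA * (normG G v)^2 ≤ v ⬝ᵥ (symPart A).mulVec v)
    (αG αGLB : ℝ) (hαGLB : 0 < αGLB) (hαGLBle : αGLB ≤ αG)
    (hcoG : ∀ v : Fin d → ℝ,
      αG * (normG G v)^2 ≤ v ⬝ᵥ (M + Δt • symPart A).mulVec v)
    (e r : ℕ → Fin d → ℝ) (he0 : e 0 = 0)
    (hprimal : ∀ k, 1 ≤ k → k ≤ N →
      (M + Δt • A).mulVec (e k) = M.mulVec (e (k - 1)) - Δt • r k)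
    (l : Fin d → ℝ)
    (Ψ Ψt : ℕ → Fin d → ℝ)
    (hΨN : M.mulVec (Ψ N) = -l)
    (hΨ : ∀ k, k < N → (M + Δt • Aᵀ).mulVec (Ψ k) = M.mulVec (Ψ (k + 1)))
    (hΨtN : Ψt N = Ψ N)
    (ϱ : ℕ → Fin d → ℝ)
    (hϱ : ∀ k, k < N →
      ϱ k = (1 / Δt) • ((M + Δt • Aᵀ).mulVec (Ψt k) - M.mulVec (Ψt (k + 1)))) :
    |l ⬝ᵥ e N - Δt * ∑ k ∈ Finset.range N, r (k + 1) ⬝ᵥ Ψt k| ≤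
      Δt * Real.sqrt (∑ k ∈ Finset.Icc 1 N, (dualNorm G (r k))^2) *
        Real.sqrt (((N * Δt + Δt) / (αGLB * αALB)) *
          ∑ m ∈ Finset.range N, (dualNorm G (ϱ m))^2) := by
  set ε : ℕ → Fin d → ℝ := fun k => Ψ k - Ψt k
  have hsteps : ∀ k < N, (M + Δt • Aᵀ) *ᵥ ε k = M *ᵥ ε (k + 1) - Δt • ϱ k := fun k hk => by
    rw [hϱ k hk, smul_smul, mul_one_div_cancel hΔt.ne', one_smul]
    simp only [ε, mulVec_sub, hΨ k hk]
    abel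
  have hout := output_eq_sum_residual_dotProduct_dual hM.isSymm he0
    (fun k hk => by simpa using hprimal (k + 1) k.succ_pos hk) hΨN hΨ
  have herr : l ⬝ᵥ e N - Δt * ∑ k ∈ range N, r (k + 1) ⬝ᵥ Ψt k =
      Δt * ∑ k ∈ range N, r (k + 1) ⬝ᵥ ε k := by
    simp only [hout, ε, dotProduct_sub, sum_sub_distrib, mul_sub]
  have hαA := hαALB.trans_le hαALBle
  have hαG := hαGLB.trans_le hαGLBle
  have hconst : N * Δt / (αG * αA) ≤ (N * Δt + Δt) / (αGLB * αALB) :=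
    div_le_div₀ (by positivity) (by linarith) (by positivity)
      (mul_le_mul hαGLBle hαALBle hαALB.le hαG.le)
  rw [herr, abs_mul, abs_of_pos hΔt, mul_assoc]
  gcongr
  refine (abs_sum_dotProduct_le_sqrt_mul_sqrt hG r ε N).trans ?_
  gcongr
  have hεN : ε N = 0 := by simp [ε, hΨtN]
  exact (sum_normG_sq_le_of_steps hM hG hΔt.le hαA hαG hcoA hcoG hεN hsteps).trans
    (mul_le_mul_of_nonneg_right hconst (sum_nonneg fun m _ => sq_nonneg _))

theorem stmt15 {d : ℕ} (hd : 1 ≤ d)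
    (M A S G : Matrix (Fin d) (Fin d) ℝ) (hM : M.PosSemidef) (hS : S.IsSymm)
    (Δt : ℝ) (hΔt : 0 < Δt)
    (hGdef : G = M + Δt • S) (hG : G.PosDef)
    (N : ℕ) (hN : 1 ≤ N)
    (αA αALB : ℝ) (hαALB : 0 < αALB) (hαALBle : αALB ≤ αA)
    (hcoA : ∀ v : Fin d → ℝ, αA * (normG G v)^2 ≤ v ⬝ᵥ (symPart A).mulVec v)
    (αG αGLB : ℝ) (hαGLB : 0 < αGLB) (hαGLBle : αGLB ≤ αG)
    (hcoG : ∀ v : Fin d → ℝ,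
      αG * (normG G v)^2 ≤ v ⬝ᵥ (M + Δt • symPart A).mulVec v)
    (e r : ℕ → Fin d → ℝ) (he0 : e 0 = 0)
    (hprimal : ∀ k, 1 ≤ k → k ≤ N →
      (M + Δt • A).mulVec (e k) = M.mulVec (e (k - 1)) - Δt • r k)
    (l : Fin d → ℝ)
    (Ψ Ψt : ℕ → Fin d → ℝ)
    (hΨN : M.mulVec (Ψ N) = -l)
    (hΨ : ∀ k, k < N → (M + Δt • Aᵀ).mulVec (Ψ k) = M.mulVec (Ψ (k + 1)))
    (hΨtN : Ψt N = Ψ N)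
    (ε ϱ : ℕ → Fin d → ℝ)
    (hε : ∀ k, ε k = Ψ k - Ψt k)
    (hϱ : ∀ k, k < N →
      ϱ k = (1 / Δt) • ((M + Δt • Aᵀ).mulVec (Ψt k) - M.mulVec (Ψt (k + 1)))) :
    |l ⬝ᵥ e N - Δt * ∑ k ∈ Finset.range N, r (k + 1) ⬝ᵥ Ψt k| ≤
      Δt * Real.sqrt (∑ k ∈ Finset.Icc 1 N, (dualNorm G (r k))^2) *
        Real.sqrt (((N * Δt + Δt) / (αGLB * αALB)) *
          ∑ m ∈ Finset.range N, (dualNorm G (ϱ m))^2) :=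
  stmt15_general M A G hM Δt hΔt hG N αA αALB hαALB hαALBle hcoA αG αGLB hαGLB hαGLBle hcoG e r he0
    hprimal l Ψ Ψt hΨN hΨ hΨtN ϱ hϱ
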